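/- arXiv:1401.3087 — 4 statements merged into one kernel-verified Lean document; each statement's English description precedes it below -/
import Mathlib

section
/- For every d ∈ ℕ, β ∈ (ℝ₊)^d and α ∈ ℝ^d with max_{j} (α_j/β_j) > 0, there exist constants c₁, c₂ > 0 (depending only on d, α, β) such that for all r ∈ ℕ, c₁ · 2^{M r} · r^{N-1} ≤ ∑_{κ ∈ ℤ₊^d, (κ,β) ≤ r} 2^{(κ,α)} ≤ c₂ · 2^{M r} · r^{N-1}, where M = max_j (α_j/β_j) and N = card{j : α_j/β_j = M}. -/
open scoped Classical

/-!
Let `p` attain `M = α p / β p`. Summing first over `κ p`, the inner sum is a truncated geometric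
series `∑_{β_p k ≤ t} 2^{α_p k}` with ratio `2^{α_p} > 1`, hence comparable to `2^{M t}`. This
reduces the sum to `2^{M r}` times the same kind of lattice sum over the remaining coordinates,
with exponents `α_j - M β_j ≤ 0`. For nonpositive exponents the lattice sum is comparable to `r^k`,
`k` the number of vanishing exponents: a coordinate with a negative exponent contributes at most
a convergent geometric series, a coordinate with exponent `0` ranges over about `r / β_j` values.
-/

open Finset

lemma two_rpow_natCast_mul (k : ℕ) (a : ℝ) : (2 : ℝ) ^ ((k : ℝ) * a) = ((2 : ℝ) ^ a) ^ k := by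
  rw [mul_comm, Real.rpow_mul zero_le_two, Real.rpow_natCast]

lemma prod_ite_mul_left {ι M : Type*} [Fintype ι] [CommMonoid M] (p : ι → Prop) [DecidablePred p]
    (x : M) (a b : ι → M) :
    ∏ j, (if p j then x * a j else b j) =
      x ^ (univ.filter p).card * ∏ j, (if p j then a j else b j) := by
  simp only [prod_ite, prod_mul_distrib, prod_const]
  ac_rfl

noncomputable def truncGeomSum (a b t : ℝ) : ℝ :=
  ∑' k : ℕ, if (k : ℝ) * b ≤ t then (2 : ℝ) ^ ((k : ℝ) * a) else 0

section truncGeomSum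

variable {a b t : ℝ}

lemma truncGeomSum_nonneg : 0 ≤ truncGeomSum a b t :=
  tsum_nonneg fun k => by split_ifs <;> positivity

lemma truncGeomSum_of_neg (hb : 0 < b) (ht : t < 0) : truncGeomSum a b t = 0 := by
  refine (tsum_congr fun k => if_neg ?_).trans tsum_zero
  have : 0 ≤ (k : ℝ) * b := by positivity
  linarith

lemma truncGeomSum_of_nonneg (hb : 0 < b) (ht : 0 ≤ t) :
    truncGeomSum a b t = ∑ k ∈ range (⌊t / b⌋₊ + 1), ((2 : ℝ) ^ a) ^ k := by
  have hle : ∀ k : ℕ, (k : ℝ) * b ≤ t ↔ k ∈ range (⌊t / b⌋₊ + 1) := fun k => by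
    rw [mem_range, Nat.lt_succ_iff, Nat.le_floor_iff (by positivity), le_div_iff₀ hb]
  unfold truncGeomSum
  simp_rw [hle, two_rpow_natCast_mul]
  rw [tsum_eq_sum fun k hk => if_neg hk]
  exact sum_congr rfl fun k hk => if_pos hk

lemma truncGeomSum_le (ha : 0 < a) (hb : 0 < b) (t : ℝ) :
    truncGeomSum a b t ≤ if 0 ≤ t then 2 ^ a / (2 ^ a - 1) * 2 ^ (a / b * t) else 0 := by
  split_ifs with ht
  · set q : ℝ := 2 ^ a
    have hq : 1 < q := Real.one_lt_rpow one_lt_two ha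
    have hK : q ^ ⌊t / b⌋₊ ≤ 2 ^ (a / b * t) := by
      rw [← two_rpow_natCast_mul]
      refine Real.rpow_le_rpow_of_exponent_le one_le_two ?_
      calc (⌊t / b⌋₊ : ℝ) * a ≤ t / b * a :=
            mul_le_mul_of_nonneg_right (Nat.floor_le (by positivity)) ha.le
        _ = a / b * t := by ring
    rw [truncGeomSum_of_nonneg hb ht, geom_sum_eq hq.ne', pow_succ]
    calc (q ^ ⌊t / b⌋₊ * q - 1) / (q - 1) ≤ q / (q - 1) * q ^ ⌊t / b⌋₊ := by
          rw [div_mul_eq_mul_div, mul_comm q]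
          exact div_le_div_of_nonneg_right (by linarith) (by linarith)
      _ ≤ q / (q - 1) * 2 ^ (a / b * t) := by gcongr
  · rw [truncGeomSum_of_neg hb (not_le.mp ht)]

lemma le_truncGeomSum (ha : 0 ≤ a) (hb : 0 < b) (t : ℝ) :
    (if 0 ≤ t then 2 ^ (a / b * (t - b)) else 0) ≤ truncGeomSum a b t := by
  split_ifs with ht
  · rw [truncGeomSum_of_nonneg hb ht]
    calc (2 : ℝ) ^ (a / b * (t - b)) ≤ 2 ^ ((⌊t / b⌋₊ : ℝ) * a) := by
          refine Real.rpow_le_rpow_of_exponent_le one_le_two ?_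
          calc a / b * (t - b) = (t / b - 1) * a := by field_simp
            _ ≤ ⌊t / b⌋₊ * a := mul_le_mul_of_nonneg_right (Nat.sub_one_lt_floor _).le ha
      _ = ((2 : ℝ) ^ a) ^ ⌊t / b⌋₊ := two_rpow_natCast_mul _ _
      _ ≤ ∑ k ∈ range (⌊t / b⌋₊ + 1), ((2 : ℝ) ^ a) ^ k :=
          single_le_sum (fun k _ => by positivity) (self_mem_range_succ _)
  · exact truncGeomSum_nonneg

lemma truncGeomSum_zero_le (hb : 0 < b) (ht : 0 ≤ t) : truncGeomSum 0 b t ≤ t / b + 1 := by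
  rw [truncGeomSum_of_nonneg hb ht]
  simpa using Nat.floor_le (div_nonneg ht hb.le)

lemma truncGeomSum_le_of_neg (ha : a < 0) (hb : 0 < b) : truncGeomSum a b t ≤ (1 - 2 ^ a)⁻¹ := by
  rcases lt_or_ge t 0 with ht | ht
  · rw [truncGeomSum_of_neg hb ht]
    exact (inv_pos.mpr (sub_pos.mpr (Real.rpow_lt_one_of_one_lt_of_neg one_lt_two ha))).le
  · rw [truncGeomSum_of_nonneg hb ht]
    simpa [← range_eq_Ico] using geom_sum_Ico_le_of_lt_one (m := 0) (n := ⌊t / b⌋₊ + 1)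
      (by positivity) (Real.rpow_lt_one_of_one_lt_of_neg one_lt_two ha)

end truncGeomSum

section latticeSum

variable {ι : Type*} [Fintype ι] {α β : ι → ℝ} {r : ℝ}

noncomputable def latticeTerm (α β : ι → ℝ) (r : ℝ) (κ : ι → ℕ) : ℝ :=
  if ∑ j, (κ j : ℝ) * β j ≤ r then (2 : ℝ) ^ (∑ j, (κ j : ℝ) * α j) else 0

noncomputable def latticeSum (α β : ι → ℝ) (r : ℝ) : ℝ :=
  ∑' κ : ι → ℕ, latticeTerm α β r κ

lemma latticeTerm_nonneg (κ : ι → ℕ) : 0 ≤ latticeTerm α β r κ := by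
  unfold latticeTerm; split_ifs <;> positivity

lemma le_floor_div_of_sum_mul_le (hβ : ∀ j, 0 < β j) {κ : ι → ℕ}
    (hκ : ∑ j, (κ j : ℝ) * β j ≤ r) (j : ι) : κ j ≤ ⌊r / β j⌋₊ := by
  have hj : (κ j : ℝ) * β j ≤ r :=
    (single_le_sum (fun i _ => mul_nonneg (κ i).cast_nonneg (hβ i).le) (mem_univ j)).trans hκ
  exact Nat.le_floor ((le_div_iff₀ (hβ j)).mpr hj)

noncomputable def latticeBox (β : ι → ℝ) (r : ℝ) : Finset (ι → ℕ) :=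
  Fintype.piFinset fun j => range (⌊r / β j⌋₊ + 1)

lemma latticeTerm_eq_zero_of_notMem_latticeBox (hβ : ∀ j, 0 < β j) {κ : ι → ℕ}
    (hκ : κ ∉ latticeBox β r) : latticeTerm α β r κ = 0 := by
  refine if_neg fun hle => hκ ?_
  simpa [latticeBox, Nat.lt_succ_iff] using le_floor_div_of_sum_mul_le hβ hle

lemma summable_latticeTerm (hβ : ∀ j, 0 < β j) : Summable (latticeTerm α β r) :=
  summable_of_ne_finset_zero fun _ => latticeTerm_eq_zero_of_notMem_latticeBox hβ

lemma latticeSum_le_prod_truncGeomSum (hβ : ∀ j, 0 < β j) (hr : 0 ≤ r) :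
    latticeSum α β r ≤ ∏ j, truncGeomSum (α j) (β j) r := by
  calc latticeSum α β r = ∑ κ ∈ latticeBox β r, latticeTerm α β r κ :=
        tsum_eq_sum fun _ => latticeTerm_eq_zero_of_notMem_latticeBox hβ
    _ ≤ ∑ κ ∈ latticeBox β r, ∏ j, ((2 : ℝ) ^ α j) ^ κ j := by
      refine sum_le_sum fun κ _ => ?_
      simp_rw [← two_rpow_natCast_mul, ← Real.rpow_sum_of_pos two_pos]
      unfold latticeTerm; split_ifs
      exacts [le_rfl, by positivity]
    _ = ∏ j, truncGeomSum (α j) (β j) r := by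
      simp_rw [truncGeomSum_of_nonneg (hβ _) hr]
      exact (prod_univ_sum _ fun j (k : ℕ) => ((2 : ℝ) ^ α j) ^ k).symm

theorem latticeSum_le_of_nonpos (hβ : ∀ j, 0 < β j) (hα : ∀ j, α j ≤ 0) :
    ∃ C > 0, ∀ r : ℝ, 1 ≤ r →
      latticeSum α β r ≤ C * r ^ (univ.filter fun j => α j = 0).card := by
  set c : ι → ℝ := fun j => if α j = 0 then (β j)⁻¹ + 1 else (1 - 2 ^ α j)⁻¹
  have hc : ∀ j, 0 < c j := fun j => by
    by_cases h : α j = 0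
    · have := hβ j
      simp only [c, if_pos h]; positivity
    · simp only [c, if_neg h]
      exact inv_pos.mpr (sub_pos.mpr
        (Real.rpow_lt_one_of_one_lt_of_neg one_lt_two (lt_of_le_of_ne (hα j) h)))
  refine ⟨∏ j, c j, prod_pos fun j _ => hc j, fun r hr => ?_⟩
  calc latticeSum α β r ≤ ∏ j, truncGeomSum (α j) (β j) r :=
        latticeSum_le_prod_truncGeomSum hβ (by linarith)
    _ ≤ ∏ j, (if α j = 0 then r * ((β j)⁻¹ + 1) else (1 - 2 ^ α j)⁻¹) := by
      refine prod_le_prod (fun j _ => truncGeomSum_nonneg) fun j _ => ?_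
      split_ifs with h
      · rw [h]
        have := hβ j
        calc truncGeomSum 0 (β j) r ≤ r / β j + 1 := truncGeomSum_zero_le (hβ j) (by linarith)
          _ ≤ r * ((β j)⁻¹ + 1) := by rw [mul_add, mul_one, ← div_eq_mul_inv]; linarith
      · exact truncGeomSum_le_of_neg (lt_of_le_of_ne (hα j) h) (hβ j)
    _ = (∏ j, c j) * r ^ (univ.filter fun j => α j = 0).card := by
      rw [prod_ite_mul_left, mul_comm]

noncomputable def zeroExponentBox (α β : ι → ℝ) (r : ℝ) : Finset (ι → ℕ) :=
  Fintype.piFinset fun j => if α j = 0 then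
    range (⌊r / ((univ.filter fun j => α j = 0).card * β j)⌋₊ + 1) else {0}

lemma latticeTerm_eq_one_of_mem_zeroExponentBox (hβ : ∀ j, 0 < β j) (hr : 0 ≤ r) {κ : ι → ℕ}
    (hκ : κ ∈ zeroExponentBox α β r) : latticeTerm α β r κ = 1 := by
  set Z := univ.filter fun j => α j = 0
  simp only [zeroExponentBox, Fintype.mem_piFinset] at hκ
  have hκα : ∀ j, (κ j : ℝ) * α j = 0 := fun j => by
    by_cases h : α j = 0
    · simp [h]
    · simpa [h] using hκ j
  have hκβ : ∀ j, (κ j : ℝ) * β j ≤ if α j = 0 then r / Z.card else 0 := fun j => by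
    by_cases h : α j = 0
    · have hZ : 0 < Z.card := card_pos.mpr ⟨j, by simp [Z, h]⟩
      have hk := hκ j
      simp only [h, if_true, mem_range, Nat.lt_succ_iff] at hk ⊢
      have := hβ j
      rwa [Nat.le_floor_iff (by positivity), div_mul_eq_div_div, le_div_iff₀ (hβ j)] at hk
    · have hk : κ j = 0 := by simpa [h] using hκ j
      simp [h, hk]
  have hsum : ∑ j, (κ j : ℝ) * β j ≤ r :=
    calc ∑ j, (κ j : ℝ) * β j ≤ ∑ j, (if α j = 0 then r / Z.card else 0) :=
          sum_le_sum fun j _ => hκβ j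
      _ = Z.card * (r / Z.card) := by simp [sum_ite, Z]
      _ ≤ r := by
          rcases Nat.eq_zero_or_pos Z.card with h | h
          · simp [h, hr]
          · rw [mul_div_cancel₀ _ (by positivity)]
  simp [latticeTerm, hsum, hκα]

theorem le_latticeSum_of_nonpos (hβ : ∀ j, 0 < β j) :
    ∃ c > 0, ∀ r : ℝ, 0 ≤ r →
      c * r ^ (univ.filter fun j => α j = 0).card ≤ latticeSum α β r := by
  set Z := univ.filter fun j => α j = 0
  set c : ι → ℝ := fun j => if α j = 0 then ((Z.card : ℝ) * β j)⁻¹ else 1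
  have hc : ∀ j, 0 < c j := fun j => by
    by_cases h : α j = 0
    · have hZ : 0 < Z.card := card_pos.mpr ⟨j, by simp [Z, h]⟩
      have := hβ j
      simp only [c, if_pos h]; positivity
    · simp only [c, if_neg h]; exact one_pos
  refine ⟨∏ j, c j, prod_pos fun j _ => hc j, fun r hr => ?_⟩
  calc (∏ j, c j) * r ^ Z.card
      = ∏ j, (if α j = 0 then r * ((Z.card : ℝ) * β j)⁻¹ else 1) := by
        rw [prod_ite_mul_left, mul_comm]
    _ ≤ ∏ j, ((if α j = 0 then range (⌊r / (Z.card * β j)⌋₊ + 1) else {0}).card : ℝ) := by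
      refine prod_le_prod (fun j _ => ?_) fun j _ => ?_
      · have := hβ j
        split_ifs <;> positivity
      split_ifs
      · simpa [div_eq_mul_inv] using (Nat.lt_floor_add_one (r / (Z.card * β j))).le
      · simp
    _ = ∑ κ ∈ zeroExponentBox α β r, latticeTerm α β r κ := by
      rw [sum_congr rfl fun κ => latticeTerm_eq_one_of_mem_zeroExponentBox hβ hr]
      simp [zeroExponentBox, Z]
    _ ≤ latticeSum α β r :=
      (summable_latticeTerm hβ).sum_le_tsum _ fun κ _ => latticeTerm_nonneg κ

end latticeSum

section succAbove

variable {n : ℕ} {α β : Fin (n + 1) → ℝ}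

lemma latticeSum_eq_tsum_succAbove (hβ : ∀ j, 0 < β j) (p : Fin (n + 1)) (r : ℝ) :
    latticeSum α β r = ∑' κ : Fin n → ℕ, (2 : ℝ) ^ (∑ i, (κ i : ℝ) * α (p.succAbove i)) *
      truncGeomSum (α p) (β p) (r - ∑ i, (κ i : ℝ) * β (p.succAbove i)) := by
  let e : (Fin n → ℕ) × ℕ ≃ (Fin (n + 1) → ℕ) :=
    (Equiv.prodComm _ _).trans (Fin.insertNthEquiv (fun _ => ℕ) p)
  have hs : Summable fun x => latticeTerm α β r (e x) :=
    e.summable_iff.mpr (summable_latticeTerm hβ)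
  rw [latticeSum, ← e.tsum_eq, hs.tsum_prod]
  refine tsum_congr fun κ => ?_
  rw [truncGeomSum, ← tsum_mul_left]
  refine tsum_congr fun k => ?_
  simp only [e, latticeTerm, Equiv.trans_apply, Equiv.prodComm_apply, Prod.swap_prod_mk,
    Fin.insertNthEquiv_apply, Fin.sum_univ_succAbove _ p, Fin.insertNth_apply_same,
    Fin.insertNth_apply_succAbove, le_sub_iff_add_le]
  split_ifs
  · rw [Real.rpow_add two_pos, mul_comm]
  · rw [mul_zero]

noncomputable def reducedExponent (α β : Fin (n + 1) → ℝ) (p : Fin (n + 1)) (i : Fin n) : ℝ :=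
  α (p.succAbove i) - α p / β p * β (p.succAbove i)

lemma sum_mul_reducedExponent (p : Fin (n + 1)) (κ : Fin n → ℕ) :
    ∑ i, (κ i : ℝ) * reducedExponent α β p i =
      ∑ i, (κ i : ℝ) * α (p.succAbove i) - α p / β p * ∑ i, (κ i : ℝ) * β (p.succAbove i) := by
  simp only [reducedExponent, mul_sub, sum_sub_distrib, mul_sum]
  congr 1
  exact sum_congr rfl fun i _ => by ring

lemma card_filter_succAbove_add_one (P : Fin (n + 1) → Prop) {p : Fin (n + 1)} (hp : P p) :
    (univ.filter fun i => P (p.succAbove i)).card + 1 = (univ.filter P).card := by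
  simp only [card_filter, Fin.sum_univ_succAbove _ p, if_pos hp, add_comm]

lemma card_reducedExponent_eq_zero_add_one (hβ : ∀ j, 0 < β j) (p : Fin (n + 1)) :
    (univ.filter fun i => reducedExponent α β p i = 0).card + 1 =
      (univ.filter fun j => α j / β j = α p / β p).card := by
  simp_rw [reducedExponent, sub_eq_zero, ← div_eq_iff (hβ _).ne']
  exact card_filter_succAbove_add_one (fun j => α j / β j = α p / β p) rfl

variable (p : Fin (n + 1)) (r : ℝ)

lemma summand_succAbove_le (hβ : ∀ j, 0 < β j) (hp : 0 < α p) (κ : Fin n → ℕ) :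
    (2 : ℝ) ^ (∑ i, (κ i : ℝ) * α (p.succAbove i)) *
        truncGeomSum (α p) (β p) (r - ∑ i, (κ i : ℝ) * β (p.succAbove i)) ≤
      2 ^ α p / (2 ^ α p - 1) * 2 ^ (α p / β p * r) *
        latticeTerm (reducedExponent α β p) (fun i => β (p.succAbove i)) r κ := by
  refine (mul_le_mul_of_nonneg_left (truncGeomSum_le hp (hβ p) _) (by positivity)).trans_eq ?_
  simp only [latticeTerm, sub_nonneg, sum_mul_reducedExponent]
  split_ifs
  · rw [mul_left_comm, ← Real.rpow_add two_pos, mul_assoc, ← Real.rpow_add two_pos]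
    ring_nf
  · simp

lemma le_summand_succAbove (hβ : ∀ j, 0 < β j) (hp : 0 ≤ α p) (κ : Fin n → ℕ) :
    2 ^ (α p / β p * (r - β p)) *
        latticeTerm (reducedExponent α β p) (fun i => β (p.succAbove i)) r κ ≤
      (2 : ℝ) ^ (∑ i, (κ i : ℝ) * α (p.succAbove i)) *
        truncGeomSum (α p) (β p) (r - ∑ i, (κ i : ℝ) * β (p.succAbove i)) := by
  refine le_trans (le_of_eq ?_)
    (mul_le_mul_of_nonneg_left (le_truncGeomSum hp (hβ p) _) (by positivity))
  simp only [latticeTerm, sub_nonneg, sum_mul_reducedExponent]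
  split_ifs
  · rw [← Real.rpow_add two_pos, ← Real.rpow_add two_pos]
    ring_nf
  · simp

lemma summable_summand_succAbove (hβ : ∀ j, 0 < β j) (hp : 0 < α p) :
    Summable fun κ : Fin n → ℕ => (2 : ℝ) ^ (∑ i, (κ i : ℝ) * α (p.succAbove i)) *
      truncGeomSum (α p) (β p) (r - ∑ i, (κ i : ℝ) * β (p.succAbove i)) :=
  ((summable_latticeTerm fun i => hβ (p.succAbove i)).mul_left _).of_nonneg_of_le
    (fun _ => mul_nonneg (by positivity) truncGeomSum_nonneg) (summand_succAbove_le p r hβ hp)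

theorem latticeSum_le_succAbove (hβ : ∀ j, 0 < β j) (hp : 0 < α p) :
    latticeSum α β r ≤ 2 ^ α p / (2 ^ α p - 1) * 2 ^ (α p / β p * r) *
      latticeSum (reducedExponent α β p) (fun i => β (p.succAbove i)) r := by
  rw [latticeSum_eq_tsum_succAbove hβ, latticeSum, ← tsum_mul_left]
  exact (summable_summand_succAbove p r hβ hp).tsum_le_tsum (summand_succAbove_le p r hβ hp)
    ((summable_latticeTerm fun i => hβ (p.succAbove i)).mul_left _)

theorem le_latticeSum_succAbove (hβ : ∀ j, 0 < β j) (hp : 0 < α p) :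
    2 ^ (α p / β p * (r - β p)) *
        latticeSum (reducedExponent α β p) (fun i => β (p.succAbove i)) r ≤ latticeSum α β r := by
  rw [latticeSum_eq_tsum_succAbove hβ, latticeSum, ← tsum_mul_left]
  exact ((summable_latticeTerm fun i => hβ (p.succAbove i)).mul_left _).tsum_le_tsum
    (le_summand_succAbove p r hβ hp.le) (summable_summand_succAbove p r hβ hp)

end succAbove

theorem exists_bounds_latticeSum {n : ℕ} {α β : Fin (n + 1) → ℝ} (hβ : ∀ j, 0 < β j)
    {p : Fin (n + 1)} (hmax : ∀ j, α j / β j ≤ α p / β p) (hp : 0 < α p) :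
    ∃ c₁ c₂ : ℝ, 0 < c₁ ∧ 0 < c₂ ∧ ∀ r : ℝ, 1 ≤ r →
      c₁ * 2 ^ (α p / β p * r) * r ^ (univ.filter fun i => reducedExponent α β p i = 0).card ≤
          latticeSum α β r ∧
        latticeSum α β r ≤
          c₂ * 2 ^ (α p / β p * r) *
            r ^ (univ.filter fun i => reducedExponent α β p i = 0).card := by
  set M := α p / β p
  set k := (univ.filter fun i => reducedExponent α β p i = 0).card
  have hβ' : ∀ i, 0 < β (p.succAbove i) := fun i => hβ _
  have hα' : ∀ i, reducedExponent α β p i ≤ 0 := fun i => by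
    have := hmax (p.succAbove i)
    rw [div_le_iff₀ (hβ _)] at this
    simpa [reducedExponent] using this
  have hq : 1 < (2 : ℝ) ^ α p := Real.one_lt_rpow one_lt_two hp
  obtain ⟨C, hC, hCW⟩ := latticeSum_le_of_nonpos hβ' hα'
  obtain ⟨c, hc, hcW⟩ := le_latticeSum_of_nonpos (α := reducedExponent α β p) hβ'
  refine ⟨2 ^ (-(M * β p)) * c, 2 ^ α p / (2 ^ α p - 1) * C, by positivity,
    mul_pos (div_pos (by positivity) (sub_pos.mpr hq)) hC, fun r hr => ⟨?_, ?_⟩⟩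
  · calc 2 ^ (-(M * β p)) * c * 2 ^ (M * r) * r ^ k
        = 2 ^ (M * (r - β p)) * (c * r ^ k) := by
          rw [mul_sub, sub_eq_neg_add, Real.rpow_add two_pos]; ring
      _ ≤ 2 ^ (M * (r - β p)) *
            latticeSum (reducedExponent α β p) (fun i => β (p.succAbove i)) r := by
          gcongr; exact hcW r (by positivity)
      _ ≤ latticeSum α β r := le_latticeSum_succAbove p r hβ hp
  · calc latticeSum α β r
        ≤ 2 ^ α p / (2 ^ α p - 1) * 2 ^ (M * r) *
            latticeSum (reducedExponent α β p) (fun i => β (p.succAbove i)) r :=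
          latticeSum_le_succAbove p r hβ hp
      _ ≤ 2 ^ α p / (2 ^ α p - 1) * 2 ^ (M * r) * (C * r ^ k) := by
          gcongr; exact hCW r hr
      _ = 2 ^ α p / (2 ^ α p - 1) * C * 2 ^ (M * r) * r ^ k := by ring

theorem stmt_0_general (d : ℕ) (α β : Fin d → ℝ) (hβ : ∀ j, 0 < β j)
    (M : ℝ) (hM : IsGreatest (Set.range fun j => α j / β j) M) (hMpos : 0 < M) :
    ∃ c₁ c₂ : ℝ, 0 < c₁ ∧ 0 < c₂ ∧ ∀ r : ℕ, 1 ≤ r →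
      (c₁ * (2 : ℝ) ^ (M * r) *
          (r : ℝ) ^ ((((Finset.univ.filter fun j => α j / β j = M).card : ℝ)) - 1) ≤
        ∑' κ : Fin d → ℕ,
          (if (∑ j, (κ j : ℝ) * β j) ≤ (r : ℝ) then (2 : ℝ) ^ (∑ j, (κ j : ℝ) * α j) else 0)) ∧
      (∑' κ : Fin d → ℕ,
          (if (∑ j, (κ j : ℝ) * β j) ≤ (r : ℝ) then (2 : ℝ) ^ (∑ j, (κ j : ℝ) * α j) else 0)) ≤
        c₂ * (2 : ℝ) ^ (M * r) *
          (r : ℝ) ^ ((((Finset.univ.filter fun j => α j / β j = M).card : ℝ)) - 1) := by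
  obtain ⟨p, rfl⟩ := hM.1
  obtain ⟨n, rfl⟩ := Nat.exists_eq_add_one_of_ne_zero p.pos.ne'
  obtain ⟨c₁, c₂, hc₁, hc₂, hbounds⟩ := exists_bounds_latticeSum hβ (fun j => hM.2 ⟨j, rfl⟩)
    ((div_pos_iff_of_pos_right (hβ p)).mp hMpos)
  refine ⟨c₁, c₂, hc₁, hc₂, fun r hr => ?_⟩
  rw [← card_reducedExponent_eq_zero_add_one hβ p, Nat.cast_add_one, add_sub_cancel_right,
    Real.rpow_natCast]
  exact hbounds r (Nat.one_le_cast.mpr hr)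

/-- Lemma 1.2.2: two-sided estimate for the lacunary sum
`∑_{κ ∈ ℤ₊^d, (κ,β) ≤ r} 2^{(κ,α)}`. -/
theorem stmt_0 (d : ℕ) (hd : 0 < d) (α β : Fin d → ℝ) (hβ : ∀ j, 0 < β j)
    (M : ℝ) (hM : IsGreatest (Set.range fun j => α j / β j) M) (hMpos : 0 < M) :
    ∃ c₁ c₂ : ℝ, 0 < c₁ ∧ 0 < c₂ ∧ ∀ r : ℕ, 1 ≤ r →
      (c₁ * (2 : ℝ) ^ (M * r) *
          (r : ℝ) ^ ((((Finset.univ.filter fun j => α j / β j = M).card : ℝ)) - 1) ≤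
        ∑' κ : Fin d → ℕ,
          (if (∑ j, (κ j : ℝ) * β j) ≤ (r : ℝ) then (2 : ℝ) ^ (∑ j, (κ j : ℝ) * α j) else 0)) ∧
      (∑' κ : Fin d → ℕ,
          (if (∑ j, (κ j : ℝ) * β j) ≤ (r : ℝ) then (2 : ℝ) ^ (∑ j, (κ j : ℝ) * α j) else 0)) ≤
        c₂ * (2 : ℝ) ^ (M * r) *
          (r : ℝ) ^ ((((Finset.univ.filter fun j => α j / β j = M).card : ℝ)) - 1) :=
  stmt_0_general d α β hβ M hM hMpos
end

section
/- Let d ∈ ℕ, l ∈ ℤ₊^d, λ ∈ ℤ₊^d with λ ≤ l componentwise, 1 ≤ p, q ≤ ∞, and ρ, σ ∈ (ℝ₊)^d. Then there exists a constant c > 0 depending only on d, l, λ, ρ, σ such that for all measurable sets D, Q ⊆ ℝ^d for which there exist δ ∈ (ℝ₊)^d and x⁰ ∈ ℝ^d with D ⊆ x⁰ + ρδ·B^d and x⁰ + σδ·I^d ⊆ Q, and for every polynomial f of componentwise degree at most l, ‖D^λ f‖_{L_q(D)} ≤ c · δ^{-λ - (1/p)·e + (1/q)·e} · ‖f‖_{L_p(Q)},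 where δ^μ = ∏_j δ_j^{μ_j} and e = (1,...,1). -/
/-!
The affine map `y ↦ x₀ + δ * y` pulls the two boxes back to the fixed boxes `[-ρ, ρ]` and
`(0, σ)`, multiplies `D^λ` by `δ^λ`, and rescales every `L_r` norm by `(∏ δ_j)^{1/r}`; this
produces the power of `δ`, so it remains to prove the inequality for `δ = 1`, `x₀ = 0`, and for
polynomials of componentwise degree at most some fixed `m`. These polynomials form a
finite-dimensional space with coordinates their coefficients `c`. On the compact box `|D^λ g|` is
at most a constant times `‖c‖`. Conversely `‖c‖` is at most a constant times `‖g‖_{L_1}` on the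
open cube: this `L_1` norm is lower semicontinuous in `c` (Fatou), homogeneous, and positive off `0`
since a polynomial vanishing on an open set is zero, so it is bounded below on the unit sphere.
Hölder's inequality on the cube passes from `L_1` to `L_p`.
-/

/-- Mixed partial derivative `D^λ` of a multivariate polynomial. -/
noncomputable def mvDeriv {d : ℕ} (lam : Fin d → ℕ) (f : MvPolynomial (Fin d) ℝ) :
    MvPolynomial (Fin d) ℝ :=
  (List.finRange d).foldl (fun g j => (fun h => MvPolynomial.pderiv j h)^[lam j] g) f

open MvPolynomial MeasureTheory

theorem lowerSemicontinuous_lintegral {X α : Type*} [TopologicalSpace X]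
    [FirstCountableTopology X] [MeasurableSpace α] {μ : Measure α} {F : X → α → ENNReal}
    (hF : ∀ a, LowerSemicontinuous (F · a)) (hF_meas : ∀ c, Measurable (F c)) :
    LowerSemicontinuous fun c => ∫⁻ a, F c a ∂μ :=
  lowerSemicontinuous_iff_le_liminf.2 fun c =>
    (lintegral_mono fun a => lowerSemicontinuous_iff_le_liminf.1 (hF a) c).trans
      (lintegral_liminf_le hF_meas)

theorem exists_enorm_le_mul_of_lowerSemicontinuous {E : Type*} [NormedAddCommGroup E]
    [NormedSpace ℝ E] [FiniteDimensional ℝ E] {N : E → ENNReal} (hN : LowerSemicontinuous N)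
    (hN_zero : ∀ v, N v = 0 → v = 0) (hN_smul : ∀ (t : ℝ) v, N (t • v) = ‖t‖ₑ * N v) :
    ∃ C : ℝ, ∀ v, ‖v‖ₑ ≤ ENNReal.ofReal C * N v := by
  rcases subsingleton_or_nontrivial E with hE | hE
  · exact ⟨0, fun v => by simp [Subsingleton.elim v 0]⟩
  obtain ⟨u₀, hu₀, hmin⟩ := (hN.lowerSemicontinuousOn _).exists_isMinOn
    (NormedSpace.sphere_nonempty.2 zero_le_one) (isCompact_sphere (0 : E) 1)
  have hpos : 0 < N u₀ := pos_iff_ne_zero.2 fun h => by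
    simp [hN_zero u₀ h] at hu₀
  obtain ⟨r, -, hr₀, hrN⟩ := ENNReal.lt_iff_exists_real_btwn.1 hpos
  have hr : 0 < r := ENNReal.ofReal_pos.1 hr₀
  refine ⟨r⁻¹, fun v => ?_⟩
  rcases eq_or_ne v 0 with rfl | hv
  · simp
  have hu : ‖v‖⁻¹ • v ∈ Metric.sphere (0 : E) 1 := by
    simp [norm_smul, hv]
  calc ‖v‖ₑ = ENNReal.ofReal r⁻¹ * ENNReal.ofReal r * ‖‖v‖‖ₑ := by
        rw [← ENNReal.ofReal_mul (inv_nonneg.2 hr.le), inv_mul_cancel₀ hr.ne',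
          ENNReal.ofReal_one, one_mul, enorm_norm]
    _ ≤ ENNReal.ofReal r⁻¹ * N (‖v‖⁻¹ • v) * ‖‖v‖‖ₑ := by
        gcongr; exact hrN.le.trans (hmin hu)
    _ = ENNReal.ofReal r⁻¹ * N v := by
        rw [mul_assoc, mul_comm (N _), ← hN_smul, smul_smul,
          mul_inv_cancel₀ (norm_ne_zero_iff.2 hv), one_smul]

theorem ENNReal.le_ofReal_div_mul {a b : ℝ} (ha : 0 < a) {x y : ENNReal}
    (h : ENNReal.ofReal a * x ≤ ENNReal.ofReal b * y) : x ≤ ENNReal.ofReal (b / a) * y := by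
  rw [ENNReal.ofReal_div_of_pos ha, ← ENNReal.mul_div_right_comm,
    ENNReal.le_div_iff_mul_le (Or.inl (by simpa using ha)) (Or.inl ENNReal.ofReal_ne_top),
    mul_comm]
  exact h

section Rescaling

variable {ι : Type*} [Fintype ι]

theorem map_add_mul_volume [DecidableEq ι] (x₀ δ : ι → ℝ) (hδ : ∀ j, δ j ≠ 0) :
    Measure.map (fun y => x₀ + δ * y) volume = ENNReal.ofReal |(∏ j, δ j)⁻¹| • volume := by
  have hdet : (Matrix.diagonal δ).det ≠ 0 := by
    rw [Matrix.det_diagonal]; exact Finset.prod_ne_zero_iff.2 fun j _ => hδ j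
  have hT : (fun y => x₀ + δ * y) = (x₀ + ·) ∘ Matrix.toLin' (Matrix.diagonal δ) := by
    ext y j; simp [Matrix.mulVec_diagonal]
  rw [hT, ← Measure.map_map (by fun_prop) (LinearMap.continuous_on_pi _).measurable,
    Real.map_matrix_volume_pi_eq_smul_volume_pi hdet, Measure.map_smul,
    map_add_left_eq_self, Matrix.det_diagonal]

theorem eLpNorm_comp_add_mul {x₀ δ : ι → ℝ} (hδ : ∀ j, 0 < δ j) {F : (ι → ℝ) → ℝ}
    (hF : Measurable F) (r : ENNReal) {S : Set (ι → ℝ)} (hS : MeasurableSet S) :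
    eLpNorm (F ∘ fun y => x₀ + δ * y) r (volume.restrict ((fun y => x₀ + δ * y) ⁻¹' S)) =
      ENNReal.ofReal ((∏ j, δ j) ^ (-r.toReal⁻¹)) * eLpNorm F r (volume.restrict S) := by
  classical
  have hV : 0 < ∏ j, δ j := Finset.prod_pos fun j _ => hδ j
  have hT : Measurable fun y : ι → ℝ => x₀ + δ * y := by fun_prop
  rw [← eLpNorm_map_measure hF.aestronglyMeasurable hT.aemeasurable,
    ← Measure.restrict_map hT hS, map_add_mul_volume x₀ δ fun j => (hδ j).ne',
    Measure.restrict_smul, eLpNorm_smul_measure_of_ne_zero (by simp [hV.ne']), smul_eq_mul,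
    abs_of_pos (inv_pos.2 hV), ENNReal.ofReal_rpow_of_pos (inv_pos.2 hV), one_div,
    ENNReal.toReal_inv, Real.inv_rpow hV.le, Real.rpow_neg hV.le]

end Rescaling

theorem MvPolynomial.eq_zero_of_eqOn_zero {σ : Type*} [Fintype σ] {p : MvPolynomial σ ℝ}
    {U : Set (σ → ℝ)} (hU : IsOpen U) (hU₀ : U.Nonempty) (hp : Set.EqOn (eval · p) 0 U) :
    p = 0 := by
  obtain ⟨a, ha⟩ := hU₀
  have := (AnalyticOnNhd.eval_mvPolynomial p).eqOn_zero_of_preconnected_of_eventuallyEq_zero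
    isPreconnected_univ (Set.mem_univ a) (Filter.eventuallyEq_of_mem (hU.mem_nhds ha) hp)
  exact MvPolynomial.funext fun x => by simpa using this (Set.mem_univ x)

variable {d : ℕ}

section Derivatives

noncomputable def iteratedPDerivₗ (lam : Fin d → ℕ) (L : List (Fin d)) :
    MvPolynomial (Fin d) ℝ →ₗ[ℝ] MvPolynomial (Fin d) ℝ :=
  L.foldl (fun A j => ((pderiv j).toLinearMap ^ lam j) ∘ₗ A) LinearMap.id

theorem iteratedPDerivₗ_finRange_apply (lam : Fin d → ℕ) (f : MvPolynomial (Fin d) ℝ) :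
    iteratedPDerivₗ lam (List.finRange d) f = mvDeriv lam f := by
  suffices ∀ (L : List (Fin d)) (A : MvPolynomial (Fin d) ℝ →ₗ[ℝ] MvPolynomial (Fin d) ℝ) f,
      L.foldl (fun A j => ((pderiv j).toLinearMap ^ lam j) ∘ₗ A) A f =
        L.foldl (fun g j => (fun h => pderiv j h)^[lam j] g) (A f) from this _ _ f
  intro L
  induction L with
  | nil => simp
  | cons j L ih => intro A f; simp [ih, Module.End.pow_apply]

theorem mvDeriv_zero (f : MvPolynomial (Fin d) ℝ) : mvDeriv 0 f = f := by
  simp [mvDeriv]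

noncomputable def rescaleVars (x₀ δ : Fin d → ℝ) (j : Fin d) : MvPolynomial (Fin d) ℝ :=
  C (x₀ j) + C (δ j) * X j

theorem eval_bind₁_rescaleVars (x₀ δ x : Fin d → ℝ) (f : MvPolynomial (Fin d) ℝ) :
    eval x (bind₁ (rescaleVars x₀ δ) f) = eval (x₀ + δ * x) f := by
  simp only [eval, eval₂Hom_bind₁]
  congr 2
  funext j
  simp [rescaleVars]

theorem pderiv_bind₁_rescaleVars (x₀ δ : Fin d → ℝ) (i : Fin d) (f : MvPolynomial (Fin d) ℝ) :
    pderiv i (bind₁ (rescaleVars x₀ δ) f) = δ i • bind₁ (rescaleVars x₀ δ) (pderiv i f) := by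
  induction f using MvPolynomial.induction_on with
  | C a => simp
  | add p q hp hq => simp only [map_add, hp, hq, smul_add]
  | mul_X p j hp =>
    rcases eq_or_ne i j with rfl | hij
    · simp [hp, rescaleVars, smul_eq_C_mul]
      ring
    · simp [hp, rescaleVars, pderiv_X_of_ne hij.symm, smul_eq_C_mul]
      ring

theorem pderiv_pow_bind₁_rescaleVars (x₀ δ : Fin d → ℝ) (i : Fin d) (n : ℕ)
    (f : MvPolynomial (Fin d) ℝ) :
    ((pderiv i).toLinearMap ^ n) (bind₁ (rescaleVars x₀ δ) f) =
      δ i ^ n • bind₁ (rescaleVars x₀ δ) (((pderiv i).toLinearMap ^ n) f) := by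
  induction n generalizing f with
  | zero => simp
  | succ n ih =>
    rw [pow_succ, Module.End.mul_apply, Module.End.mul_apply, Derivation.coeFn_coe,
      pderiv_bind₁_rescaleVars, map_smul, ih, smul_smul, ← pow_succ']

theorem iteratedPDerivₗ_bind₁_rescaleVars (lam : Fin d → ℕ) (x₀ δ : Fin d → ℝ)
    (L : List (Fin d)) (f : MvPolynomial (Fin d) ℝ) :
    iteratedPDerivₗ lam L (bind₁ (rescaleVars x₀ δ) f) =
      (L.map fun j => δ j ^ lam j).prod • bind₁ (rescaleVars x₀ δ) (iteratedPDerivₗ lam L f) := by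
  induction L using List.reverseRecOn generalizing f with
  | nil => simp [iteratedPDerivₗ]
  | append_singleton L j ih =>
    simp only [iteratedPDerivₗ, List.foldl_append, List.foldl_cons, List.foldl_nil,
      LinearMap.comp_apply] at ih ⊢
    simp only [ih, map_smul, pderiv_pow_bind₁_rescaleVars, smul_smul, List.map_append,
      List.prod_append, List.map_cons, List.map_nil, List.prod_cons, List.prod_nil, mul_one,
      mul_comm]

theorem mvDeriv_bind₁_rescaleVars (lam : Fin d → ℕ) (x₀ δ : Fin d → ℝ)
    (f : MvPolynomial (Fin d) ℝ) :
    mvDeriv lam (bind₁ (rescaleVars x₀ δ) f) =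
      (∏ j, δ j ^ lam j) • bind₁ (rescaleVars x₀ δ) (mvDeriv lam f) := by
  rw [← iteratedPDerivₗ_finRange_apply, ← iteratedPDerivₗ_finRange_apply,
    iteratedPDerivₗ_bind₁_rescaleVars, Fin.prod_univ_def]

theorem degreeOf_rescaleVars_le (x₀ δ : Fin d → ℝ) (i j : Fin d) :
    degreeOf i (rescaleVars x₀ δ j) ≤ if i = j then 1 else 0 := by
  refine (degreeOf_add_le _ _ _).trans (max_le (by simp) ((degreeOf_C_mul_le _ _ _).trans ?_))
  simp [degreeOf_X]

theorem degreeOf_bind₁_rescaleVars_le (x₀ δ : Fin d → ℝ) (i : Fin d)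
    (f : MvPolynomial (Fin d) ℝ) :
    degreeOf i (bind₁ (rescaleVars x₀ δ) f) ≤ degreeOf i f := by
  rw [bind₁, aeval_def, eval₂_eq]
  refine (degreeOf_sum_le _ _ _).trans (Finset.sup_le fun s hs => ?_)
  calc degreeOf i (algebraMap ℝ _ (coeff s f) * ∏ j ∈ s.support, rescaleVars x₀ δ j ^ s j)
      ≤ ∑ j ∈ s.support, degreeOf i (rescaleVars x₀ δ j ^ s j) :=
        (degreeOf_C_mul_le _ _ _).trans (degreeOf_prod_le _ _ _)
    _ ≤ ∑ j ∈ s.support, if i = j then s j else 0 := by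
        gcongr with j
        refine (degreeOf_pow_le _ _ _).trans
          ((Nat.mul_le_mul_left _ (degreeOf_rescaleVars_le x₀ δ i j)).trans ?_)
        split_ifs <;> simp
    _ ≤ s i := by rw [Finset.sum_ite_eq]; split_ifs <;> simp
    _ ≤ degreeOf i f := monomial_le_degreeOf i hs

theorem eLpNorm_eval_mvDeriv_bind₁_rescaleVars (lam : Fin d → ℕ) {x₀ δ : Fin d → ℝ}
    (hδ : ∀ j, 0 < δ j) (r : ENNReal) {S : Set (Fin d → ℝ)} (hS : MeasurableSet S)
    (f : MvPolynomial (Fin d) ℝ) :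
    eLpNorm (eval · (mvDeriv lam (bind₁ (rescaleVars x₀ δ) f))) r
        (volume.restrict ((fun y => x₀ + δ * y) ⁻¹' S)) =
      ENNReal.ofReal ((∏ j, δ j ^ lam j) * (∏ j, δ j) ^ (-r.toReal⁻¹)) *
        eLpNorm (eval · (mvDeriv lam f)) r (volume.restrict S) := by
  have hP : 0 ≤ ∏ j, δ j ^ lam j := Finset.prod_nonneg fun j _ => pow_nonneg (hδ j).le _
  have : (eval · (mvDeriv lam (bind₁ (rescaleVars x₀ δ) f))) =
      (∏ j, δ j ^ lam j) • ((eval · (mvDeriv lam f)) ∘ fun y => x₀ + δ * y) := by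
    funext y
    simp [mvDeriv_bind₁_rescaleVars, smul_eval, eval_bind₁_rescaleVars]
  rw [this, eLpNorm_const_smul, eLpNorm_comp_add_mul hδ (continuous_eval _).measurable r hS,
    ← mul_assoc, Real.enorm_of_nonneg hP, ENNReal.ofReal_mul hP]

theorem eLpNorm_eval_bind₁_rescaleVars {x₀ δ : Fin d → ℝ} (hδ : ∀ j, 0 < δ j) (r : ENNReal)
    {S : Set (Fin d → ℝ)} (hS : MeasurableSet S) (f : MvPolynomial (Fin d) ℝ) :
    eLpNorm (eval · (bind₁ (rescaleVars x₀ δ) f)) r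
        (volume.restrict ((fun y => x₀ + δ * y) ⁻¹' S)) =
      ENNReal.ofReal ((∏ j, δ j) ^ (-r.toReal⁻¹)) * eLpNorm (eval · f) r (volume.restrict S) := by
  simpa [mvDeriv_zero] using eLpNorm_eval_mvDeriv_bind₁_rescaleVars 0 hδ r hS f

end Derivatives

section FiniteDimensional

noncomputable def boxExponents (d m : ℕ) : Finset (Fin d →₀ ℕ) :=
  Finset.Iic (Finsupp.equivFunOnFinite.symm fun _ => m)

theorem mem_boxExponents {m : ℕ} {s : Fin d →₀ ℕ} : s ∈ boxExponents d m ↔ ∀ j, s j ≤ m := by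
  simp [boxExponents, Finsupp.le_def]

noncomputable def ofCoeffs {m : ℕ} (c : boxExponents d m → ℝ) : MvPolynomial (Fin d) ℝ :=
  ∑ s, c s • monomial (s : Fin d →₀ ℕ) 1

theorem coeff_ofCoeffs {m : ℕ} (c : boxExponents d m → ℝ) (s : boxExponents d m) :
    coeff s (ofCoeffs c) = c s := by
  classical
  simp [ofCoeffs, coeff_sum, coeff_monomial]

theorem ofCoeffs_coeff {m : ℕ} {f : MvPolynomial (Fin d) ℝ} (hf : ∀ j, degreeOf j f ≤ m) :
    ofCoeffs (fun s : boxExponents d m => coeff s f) = f := by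
  have hsupp : f.support ⊆ boxExponents d m := fun s hs =>
    mem_boxExponents.2 fun j => (monomial_le_degreeOf j hs).trans (hf j)
  conv_rhs => rw [f.as_sum, Finset.sum_subset hsupp fun s _ hs => by
    rw [notMem_support_iff.1 hs, monomial_zero]]
  simp only [ofCoeffs, smul_monomial, smul_eq_mul, mul_one]
  exact Finset.sum_coe_sort (boxExponents d m) fun s => monomial s (coeff s f)

theorem ofCoeffs_smul {m : ℕ} (t : ℝ) (c : boxExponents d m → ℝ) :
    ofCoeffs (t • c) = t • ofCoeffs c := by
  simp [ofCoeffs, Finset.smul_sum, smul_smul]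

theorem eval_mvDeriv_ofCoeffs (lam : Fin d → ℕ) {m : ℕ} (c : boxExponents d m → ℝ)
    (x : Fin d → ℝ) :
    eval x (mvDeriv lam (ofCoeffs c)) = ∑ s, c s * eval x (mvDeriv lam (monomial s 1)) := by
  simp [ofCoeffs, ← iteratedPDerivₗ_finRange_apply, smul_eval]

theorem continuous_eval_ofCoeffs {m : ℕ} (x : Fin d → ℝ) :
    Continuous fun c : boxExponents d m → ℝ => eval x (ofCoeffs c) := by
  simp only [ofCoeffs, map_sum, smul_eval]
  fun_prop

theorem exists_norm_eval_mvDeriv_ofCoeffs_le (lam : Fin d → ℕ) {K : Set (Fin d → ℝ)}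
    (hK : IsCompact K) (m : ℕ) :
    ∃ C : ℝ, ∀ (c : boxExponents d m → ℝ), ∀ x ∈ K,
      ‖eval x (mvDeriv lam (ofCoeffs c))‖ ≤ C * ‖c‖ := by
  choose b hb using fun s : boxExponents d m => hK.exists_bound_of_continuousOn
    (continuous_eval (mvDeriv lam (monomial (s : Fin d →₀ ℕ) 1))).continuousOn
  refine ⟨∑ s, b s, fun c x hx => ?_⟩
  rw [eval_mvDeriv_ofCoeffs, Finset.sum_mul]
  refine (norm_sum_le _ _).trans (Finset.sum_le_sum fun s _ => ?_)
  rw [norm_mul, mul_comm (b s)]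
  exact mul_le_mul (norm_le_pi_norm c s) (hb s x hx) (norm_nonneg _) (norm_nonneg _)

theorem exists_enorm_le_mul_eLpNorm_one_ofCoeffs {U : Set (Fin d → ℝ)} (hU : IsOpen U)
    (hU₀ : U.Nonempty) (m : ℕ) :
    ∃ C : ℝ, ∀ c : boxExponents d m → ℝ,
      ‖c‖ₑ ≤ ENNReal.ofReal C * eLpNorm (eval · (ofCoeffs c)) 1 (volume.restrict U) := by
  refine exists_enorm_le_mul_of_lowerSemicontinuous ?_ (fun c hc => ?_) fun t c => ?_
  · simp only [eLpNorm_one_eq_lintegral_enorm]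
    exact lowerSemicontinuous_lintegral
      (fun x => (continuous_enorm.comp (continuous_eval_ofCoeffs x)).lowerSemicontinuous)
      fun c => (continuous_eval _).enorm.measurable
  · rw [eLpNorm_eq_zero_iff (continuous_eval _).aestronglyMeasurable one_ne_zero] at hc
    have h0 := eq_zero_of_eqOn_zero hU hU₀ (Measure.eqOn_open_of_ae_eq hc hU
      (continuous_eval _).continuousOn continuousOn_const)
    ext s
    simpa [h0] using (coeff_ofCoeffs c s).symm
  · simp only [ofCoeffs_smul, smul_eval]
    exact eLpNorm_const_smul t _ 1 _

theorem exists_eLpNorm_mvDeriv_le (lam : Fin d → ℕ) {K U : Set (Fin d → ℝ)} (hK : IsCompact K)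
    (hU : IsOpen U) (hU₀ : U.Nonempty) (hU_fin : volume U ≠ ⊤) {p : ENNReal} (hp : 1 ≤ p)
    (q : ENNReal) (m : ℕ) :
    ∃ C : ℝ, 0 < C ∧ ∀ g : MvPolynomial (Fin d) ℝ, (∀ j, degreeOf j g ≤ m) →
      eLpNorm (eval · (mvDeriv lam g)) q (volume.restrict K) ≤
        ENNReal.ofReal C * eLpNorm (eval · g) p (volume.restrict U) := by
  obtain ⟨C₁, hC₁⟩ := exists_norm_eval_mvDeriv_ofCoeffs_le lam hK m
  obtain ⟨C₂, hC₂⟩ := exists_enorm_le_mul_eLpNorm_one_ofCoeffs hU hU₀ m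
  set M := volume K ^ q.toReal⁻¹ * ENNReal.ofReal C₁ * ENNReal.ofReal C₂ *
    volume U ^ (1 - p.toReal⁻¹)
  have hM : M ≠ ⊤ := by
    have := hK.measure_lt_top (μ := volume)
    exact ENNReal.mul_ne_top (by finiteness)
      (ENNReal.rpow_ne_top_of_ne_zero (hU.measure_pos volume hU₀).ne' hU_fin)
  refine ⟨M.toReal + 1, by positivity, fun g hg => ?_⟩
  obtain ⟨c, rfl⟩ : ∃ c, ofCoeffs c = g := ⟨_, ofCoeffs_coeff hg⟩
  have hsup : ∀ᵐ x ∂volume.restrict K, ‖eval x (mvDeriv lam (ofCoeffs c))‖ ≤ C₁ * ‖c‖ :=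
    ae_restrict_of_forall_mem hK.measurableSet (hC₁ c)
  have hHolder := eLpNorm_le_eLpNorm_mul_rpow_measure_univ (μ := volume.restrict U) hp
    (continuous_eval (ofCoeffs c)).aestronglyMeasurable
  calc eLpNorm (eval · (mvDeriv lam (ofCoeffs c))) q (volume.restrict K)
      ≤ volume K ^ q.toReal⁻¹ * (ENNReal.ofReal C₁ * ‖c‖ₑ) := by
        simpa [ENNReal.ofReal_mul' (norm_nonneg c), ofReal_norm] using
          eLpNorm_le_of_ae_bound hsup
    _ ≤ volume K ^ q.toReal⁻¹ * (ENNReal.ofReal C₁ * (ENNReal.ofReal C₂ *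
          (eLpNorm (eval · (ofCoeffs c)) p (volume.restrict U) *
            volume U ^ (1 - p.toReal⁻¹)))) := by
        gcongr
        refine (hC₂ c).trans ?_
        gcongr
        simpa using hHolder
    _ = M * eLpNorm (eval · (ofCoeffs c)) p (volume.restrict U) := by ring
    _ ≤ ENNReal.ofReal (M.toReal + 1) * eLpNorm (eval · (ofCoeffs c)) p (volume.restrict U) := by
        gcongr
        exact (ENNReal.le_ofReal_iff_toReal_le hM (by positivity)).2 (by linarith)

end FiniteDimensional

theorem preimage_add_mul_setOf_abs_sub_le {x₀ δ : Fin d → ℝ} (hδ : ∀ j, 0 < δ j)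
    (ρ : Fin d → ℝ) :
    (fun y => x₀ + δ * y) ⁻¹' {x | ∀ j, |x j - x₀ j| ≤ ρ j * δ j} =
      Set.univ.pi fun j => Set.Icc (-ρ j) (ρ j) := by
  ext y
  simp only [Set.mem_preimage, Set.mem_ofPred_eq, Set.mem_univ_pi, Pi.add_apply, Pi.mul_apply,
    add_sub_cancel_left, Set.mem_Icc]
  refine forall_congr' fun j => ?_
  rw [abs_mul, abs_of_pos (hδ j), mul_comm (ρ j), mul_le_mul_iff_right₀ (hδ j), abs_le]

theorem preimage_add_mul_setOf_mem_Ioo {x₀ δ : Fin d → ℝ} (hδ : ∀ j, 0 < δ j)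
    (σ : Fin d → ℝ) :
    (fun y => x₀ + δ * y) ⁻¹' {x | ∀ j, x j ∈ Set.Ioo (x₀ j) (x₀ j + σ j * δ j)} =
      Set.univ.pi fun j => Set.Ioo 0 (σ j) := by
  ext y
  simp [mul_comm _ (δ _), mul_pos_iff_of_pos_left (hδ _), mul_lt_mul_iff_right₀ (hδ _)]

theorem prod_rpow_eq_div {δ : Fin d → ℝ} (hδ : ∀ j, 0 < δ j) (lam : Fin d → ℕ) (a b : ℝ) :
    ∏ j, δ j ^ (-(lam j : ℝ) - a + b) =
      (∏ j, δ j) ^ (-a) / ((∏ j, δ j ^ lam j) * (∏ j, δ j) ^ (-b)) := by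
  rw [← Real.finsetProd_rpow _ _ fun j _ => (hδ j).le,
    ← Real.finsetProd_rpow _ _ fun j _ => (hδ j).le, ← Finset.prod_mul_distrib,
    ← Finset.prod_div_distrib]
  refine Finset.prod_congr rfl fun j _ => ?_
  rw [Real.rpow_add (hδ j), Real.rpow_sub (hδ j), Real.rpow_neg (hδ j).le,
    Real.rpow_neg (hδ j).le, Real.rpow_neg (hδ j).le, Real.rpow_natCast]
  field_simp

open MeasureTheory in
theorem stmt_11_general (d : ℕ) (l lam : Fin d → ℕ)
    (p q : ENNReal) (hp : 1 ≤ p) (ρ σ : Fin d → ℝ)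
    (hσ : ∀ j, 0 < σ j) :
    ∃ c : ℝ, 0 < c ∧
      ∀ (D Q : Set (Fin d → ℝ)), MeasurableSet D → MeasurableSet Q →
      ∀ (δ : Fin d → ℝ) (x₀ : Fin d → ℝ), (∀ j, 0 < δ j) →
      (∀ x ∈ D, ∀ j, |x j - x₀ j| ≤ ρ j * δ j) →
      ({x : Fin d → ℝ | ∀ j, x j ∈ Set.Ioo (x₀ j) (x₀ j + σ j * δ j)} ⊆ Q) →
      ∀ f : MvPolynomial (Fin d) ℝ, (∀ j, f.degreeOf j ≤ l j) →
      eLpNorm (fun x => MvPolynomial.eval x (mvDeriv lam f)) q (volume.restrict D) ≤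
        ENNReal.ofReal
            (c * ∏ j, δ j ^ (-(lam j : ℝ) - (p.toReal)⁻¹ + (q.toReal)⁻¹)) *
          eLpNorm (fun x => MvPolynomial.eval x f) p (volume.restrict Q) := by
  obtain ⟨C, hC, hbound⟩ := exists_eLpNorm_mvDeriv_le lam
    (isCompact_univ_pi fun j => isCompact_Icc (a := -ρ j) (b := ρ j))
    (isOpen_set_pi Set.finite_univ fun j _ => isOpen_Ioo (a := 0) (b := σ j))
    (Set.univ_pi_nonempty_iff.2 fun j => Set.nonempty_Ioo.2 (hσ j))
    (by simp [Real.volume_pi_Ioo, ENNReal.prod_ne_top]) hp q (∑ j, l j)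
  refine ⟨C, hC, fun D Q _ _ δ x₀ hδ hD hQ f hf => ?_⟩
  have hg : ∀ j, degreeOf j (bind₁ (rescaleVars x₀ δ) f) ≤ ∑ j, l j := fun j =>
    (degreeOf_bind₁_rescaleVars_le x₀ δ j f).trans
      ((hf j).trans (Finset.single_le_sum (by simp) (Finset.mem_univ j)))
  have hB : MeasurableSet {x : Fin d → ℝ | ∀ j, |x j - x₀ j| ≤ ρ j * δ j} := by
    measurability
  have hS : MeasurableSet {x : Fin d → ℝ | ∀ j, x j ∈ Set.Ioo (x₀ j) (x₀ j + σ j * δ j)} := by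
    measurability
  have hV : 0 < ∏ j, δ j := Finset.prod_pos fun j _ => hδ j
  have hP : 0 < ∏ j, δ j ^ lam j := Finset.prod_pos fun j _ => pow_pos (hδ j) _
  have key := hbound _ hg
  rw [← preimage_add_mul_setOf_abs_sub_le hδ, ← preimage_add_mul_setOf_mem_Ioo hδ,
    eLpNorm_eval_mvDeriv_bind₁_rescaleVars lam hδ q hB, eLpNorm_eval_bind₁_rescaleVars hδ p hS,
    ← mul_assoc, ← ENNReal.ofReal_mul hC.le] at key
  calc _ ≤ eLpNorm (eval · (mvDeriv lam f)) q
        (volume.restrict {x : Fin d → ℝ | ∀ j, |x j - x₀ j| ≤ ρ j * δ j}) :=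
        eLpNorm_mono_measure _ (Measure.restrict_mono hD le_rfl)
    _ ≤ _ := ENNReal.le_ofReal_div_mul (mul_pos hP (Real.rpow_pos_of_pos hV _)) key
    _ ≤ _ := by
      rw [mul_div_assoc, ← prod_rpow_eq_div hδ]
      gcongr

open MeasureTheory in
/-- Lemma 1.1.2 (inequality (1.1.1)): a Bernstein–Markov-type inequality for polynomials
of componentwise degree at most `l` on comparable boxes. -/
theorem stmt_11 (d : ℕ) (hd : 0 < d) (l lam : Fin d → ℕ) (hlam : ∀ j, lam j ≤ l j)
    (p q : ENNReal) (hp : 1 ≤ p) (hq : 1 ≤ q) (ρ σ : Fin d → ℝ)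
    (hρ : ∀ j, 0 < ρ j) (hσ : ∀ j, 0 < σ j) :
    ∃ c : ℝ, 0 < c ∧
      ∀ (D Q : Set (Fin d → ℝ)), MeasurableSet D → MeasurableSet Q →
      ∀ (δ : Fin d → ℝ) (x₀ : Fin d → ℝ), (∀ j, 0 < δ j) →
      (∀ x ∈ D, ∀ j, |x j - x₀ j| ≤ ρ j * δ j) →
      ({x : Fin d → ℝ | ∀ j, x j ∈ Set.Ioo (x₀ j) (x₀ j + σ j * δ j)} ⊆ Q) →
      ∀ f : MvPolynomial (Fin d) ℝ, (∀ j, f.degreeOf j ≤ l j) →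
      eLpNorm (fun x => MvPolynomial.eval x (mvDeriv lam f)) q (volume.restrict D) ≤
        ENNReal.ofReal
            (c * ∏ j, δ j ^ (-(lam j : ℝ) - (p.toReal)⁻¹ + (q.toReal)⁻¹)) *
          eLpNorm (fun x => MvPolynomial.eval x f) p (volume.restrict Q) :=
  stmt_11_general d l lam p q hp ρ σ hσ
end

section
/- Let d ∈ ℕ. For each j = 1,...,d and each bounded linear operator T : C([0,1]) → C([0,1]), there exists a unique bounded linear operator 𝒯^j : C([0,1]^d) → C([0,1]^d) such that for every f ∈ C([0,1]^d), all choices of the other coordinates, and every x_j ∈ [0,1], (𝒯^j f)(x_1,...,x_d) = (T(f(x_1,...,x_{j-1},·,x_{j+1},...,x_d)))(x_j). The map V_j : T ↦ 𝒯^j is a continuous Banach algebra homomorphism from ℬ(C([0,1])) to ℬ(C([0,1]^d)), and V_i(S) ∘ V_j(T) = V_j(T) ∘ V_i(S) whenever i ≠ j. -/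
/-!
`V_j(T) f` is defined by the displayed formula; it is continuous because the slice map
`x ↦ f(x_1, …, x_{j-1}, ·, x_{j+1}, …, x_d)` is continuous into `C([0,1])`, and
`‖V_j(T) f‖ ≤ ‖T‖ ‖f‖` makes `V_j` a bounded operator and a continuous map. Multiplicativity
holds because the `j`-th slice of `V_j(T) f` through `x` is `T` applied to the slice of `f`.
For `i ≠ j`, both `V_i(S) V_j(T)` and `V_j(T) V_i(S)` send a product `∏_k g_k(x_k)` to the
same product with `g_i, g_j` replaced by `S g_i, T g_j`; by Stone–Weierstrass such products
span a dense subspace of `C([0,1]^d)`.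
-/

/-- The `j`-th slice through `x` of a continuous function on the cube `[0,1]^d`,
as a continuous function on `[0,1]`. -/
def sliceCM (d : ℕ) (j : Fin d) (x : Fin d → Set.Icc (0 : ℝ) 1)
    (f : C((Fin d → Set.Icc (0 : ℝ) 1), ℝ)) : C(Set.Icc (0 : ℝ) 1, ℝ) :=
  f.comp ⟨fun t => Function.update x j t, (continuous_const.update j continuous_id)⟩

/-- The statement that `𝒯 : C([0,1]^d) → C([0,1]^d)` acts as `T : C([0,1]) → C([0,1])`
in the `j`-th variable. -/
def ActsInCoordC (d : ℕ) (j : Fin d)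
    (T : C(Set.Icc (0 : ℝ) 1, ℝ) →L[ℝ] C(Set.Icc (0 : ℝ) 1, ℝ))
    (𝒯 : C((Fin d → Set.Icc (0 : ℝ) 1), ℝ) →L[ℝ] C((Fin d → Set.Icc (0 : ℝ) 1), ℝ)) :
    Prop :=
  ∀ (f : C((Fin d → Set.Icc (0 : ℝ) 1), ℝ)) (x : Fin d → Set.Icc (0 : ℝ) 1),
    (𝒯 f) x = (T (sliceCM d j x f)) (x j)

namespace ContinuousMap

open Function Set Submodule

noncomputable section

variable {ι X : Type*} [TopologicalSpace X]

lemma norm_comp_le {Y E : Type*} [TopologicalSpace Y] [CompactSpace X] [CompactSpace Y]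
    [SeminormedAddCommGroup E] (f : C(Y, E)) (g : C(X, Y)) : ‖f.comp g‖ ≤ ‖f‖ :=
  (norm_le _ (norm_nonneg f)).2 fun x => f.norm_coe_le_norm (g x)

section Update

variable [DecidableEq ι]

def updateAt (x : ι → X) (j : ι) : C(X, ι → X) :=
  ⟨update x j, continuous_const.update j continuous_id⟩

@[simp] lemma updateAt_apply (x : ι → X) (j : ι) (t : X) : updateAt x j t = update x j t := rfl

lemma updateAt_update (x : ι → X) (j : ι) (t : X) : updateAt (update x j t) j = updateAt x j := by
  ext s k
  simp

lemma continuous_comp_updateAt {Y : Type*} [TopologicalSpace Y] (f : C(ι → X, Y)) (j : ι) :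
    Continuous fun x : ι → X => f.comp (updateAt x j) :=
  (continuous_postcomp f).comp (curry ⟨fun p : (ι → X) × X => update p.1 j p.2,
    continuous_update j⟩).continuous

variable [CompactSpace X]

def coordOpFun (j : ι) (T : C(X, ℝ) →L[ℝ] C(X, ℝ)) (f : C(ι → X, ℝ)) : C(ι → X, ℝ) :=
  ⟨fun x => T (f.comp (updateAt x j)) (x j), continuous_eval.comp
    ((T.continuous.comp (continuous_comp_updateAt f j)).prodMk (continuous_apply j))⟩

lemma norm_coordOpFun_le (j : ι) (T : C(X, ℝ) →L[ℝ] C(X, ℝ)) (f : C(ι → X, ℝ)) :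
    ‖coordOpFun j T f‖ ≤ ‖T‖ * ‖f‖ := by
  refine (norm_le _ (by positivity)).2 fun x => ?_
  calc ‖T (f.comp (updateAt x j)) (x j)‖ ≤ ‖T (f.comp (updateAt x j))‖ := norm_coe_le_norm _ _
    _ ≤ ‖T‖ * ‖f.comp (updateAt x j)‖ := T.le_opNorm _
    _ ≤ ‖T‖ * ‖f‖ := by gcongr; exact norm_comp_le f _

def coordOp (j : ι) (T : C(X, ℝ) →L[ℝ] C(X, ℝ)) : C(ι → X, ℝ) →L[ℝ] C(ι → X, ℝ) :=
  LinearMap.mkContinuous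
    { toFun := coordOpFun j T
      map_add' f g := by ext x; simp [coordOpFun]
      map_smul' c f := by ext x; simp [coordOpFun] }
    ‖T‖ (norm_coordOpFun_le j T)

@[simp] lemma coordOp_apply (j : ι) (T : C(X, ℝ) →L[ℝ] C(X, ℝ)) (f : C(ι → X, ℝ)) (x : ι → X) :
    coordOp j T f x = T (f.comp (updateAt x j)) (x j) := rfl

lemma norm_coordOp_le (j : ι) (T : C(X, ℝ) →L[ℝ] C(X, ℝ)) : ‖coordOp (ι := ι) j T‖ ≤ ‖T‖ :=
  LinearMap.mkContinuous_norm_le _ (norm_nonneg T) _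

lemma coordOp_comp_updateAt (j : ι) (T : C(X, ℝ) →L[ℝ] C(X, ℝ)) (f : C(ι → X, ℝ))
    (x : ι → X) : (coordOp j T f).comp (updateAt x j) = T (f.comp (updateAt x j)) := by
  ext t
  simp [updateAt_update]

def coordOpAlgHom (j : ι) : (C(X, ℝ) →L[ℝ] C(X, ℝ)) →ₐ[ℝ] (C(ι → X, ℝ) →L[ℝ] C(ι → X, ℝ)) where
  toFun := coordOp j
  map_one' := by ext f x; simp
  map_mul' S T := by ext f x; simp [coordOp_comp_updateAt]
  map_zero' := by ext f x; simp
  map_add' S T := by ext f x; simp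
  commutes' r := by ext f x; simp [Algebra.algebraMap_eq_smul_one]

lemma continuous_coordOpAlgHom (j : ι) : Continuous (coordOpAlgHom (X := X) (ι := ι) j) :=
  AddMonoidHomClass.continuous_of_bound (coordOpAlgHom (X := X) (ι := ι) j) 1 fun T =>
    (norm_coordOp_le j T).trans_eq (one_mul _).symm

end Update

section Products

variable [Fintype ι]

def piProd : (ι → C(X, ℝ)) →* C(ι → X, ℝ) where
  toFun g := ⟨fun x => ∏ k, g k (x k), by fun_prop⟩
  map_one' := by ext; simp
  map_mul' g h := by ext; simp [Finset.prod_mul_distrib]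

@[simp] lemma piProd_apply (g : ι → C(X, ℝ)) (x : ι → X) : piProd g x = ∏ k, g k (x k) := rfl

lemma piProd_mulSingle [DecidableEq ι] (k : ι) (g : C(X, ℝ)) (x : ι → X) :
    piProd (Pi.mulSingle k g) x = g (x k) :=
  calc ∏ i, (Pi.mulSingle k g : ι → C(X, ℝ)) i (x i) = ∏ i, Pi.mulSingle k (g (x k)) i :=
        Finset.prod_congr rfl fun i _ =>
          Pi.apply_mulSingle (fun i (h : C(X, ℝ)) => h (x i)) (fun _ => rfl) k g i
    _ = g (x k) := by simp

lemma piProd_update_apply_update [DecidableEq ι] (g : ι → C(X, ℝ)) (j : ι) (v : C(X, ℝ))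
    (x : ι → X) (t : X) :
    piProd (update g j v) (update x j t) = v t * ∏ k ∈ Finset.univ \ {j}, g k (x k) := by
  rw [piProd_apply]
  simp_rw [apply_update₂ (fun k (h : C(X, ℝ)) (s : X) => h s)]
  exact Finset.prod_update_of_mem (Finset.mem_univ j) _ _

lemma separatesPoints_adjoin_range_piProd [T35Space X] :
    (Algebra.adjoin ℝ (range (piProd (ι := ι) (X := X)))).SeparatesPoints := by
  classical
  intro x y hxy
  obtain ⟨k, hk⟩ := Function.ne_iff.1 hxy
  obtain ⟨φ, hφ, hφk⟩ := separatesPoints_continuous_of_t35Space hk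
  refine ⟨_, ⟨piProd (Pi.mulSingle k ⟨φ, hφ⟩), Algebra.subset_adjoin ⟨_, rfl⟩, rfl⟩, ?_⟩
  dsimp only
  rwa [piProd_mulSingle, piProd_mulSingle]

variable [CompactSpace X]

lemma coordOp_piProd [DecidableEq ι] (j : ι) (T : C(X, ℝ) →L[ℝ] C(X, ℝ))
    (g : ι → C(X, ℝ)) : coordOp j T (piProd g) = piProd (update g j (T (g j))) := by
  ext x
  have hslice : (piProd g).comp (updateAt x j) = (∏ k ∈ Finset.univ \ {j}, g k (x k)) • g j := by
    ext t
    rw [comp_apply, updateAt_apply]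
    nth_rw 1 [← update_eq_self j g]
    rw [piProd_update_apply_update, smul_apply, smul_eq_mul, mul_comm]
  rw [coordOp_apply, hslice, map_smul, smul_apply, smul_eq_mul, ← update_eq_self j x,
    piProd_update_apply_update, update_eq_self, mul_comm]

variable [T2Space X]

lemma dense_span_range_piProd :
    Dense (span ℝ (range (piProd (ι := ι) (X := X))) : Set C(ι → X, ℝ)) := by
  have hspan : Subalgebra.toSubmodule (Algebra.adjoin ℝ (range (piProd (ι := ι) (X := X))))
      = span ℝ (range piProd) := by
    refine Algebra.adjoin_eq_span_of_subset ℝ ?_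
    rw [← MonoidHom.coe_mrange, Submonoid.closure_eq]
    exact subset_span
  have htop := subalgebra_topologicalClosure_eq_top_of_separatesPoints _
    (separatesPoints_adjoin_range_piProd (ι := ι) (X := X))
  rw [← hspan, Subalgebra.coe_toSubmodule, dense_iff_closure_eq,
    ← Subalgebra.topologicalClosure_coe, htop]
  rfl

lemma continuousLinearMap_ext_piProd {E : Type*} [TopologicalSpace E] [AddCommMonoid E]
    [Module ℝ E] [T2Space E] {A B : C(ι → X, ℝ) →L[ℝ] E}
    (h : ∀ g, A (piProd g) = B (piProd g)) : A = B :=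
  ContinuousLinearMap.ext_on dense_span_range_piProd (forall_mem_range.2 h)

lemma commute_coordOp [DecidableEq ι] {i j : ι} (hij : i ≠ j) (S T : C(X, ℝ) →L[ℝ] C(X, ℝ)) :
    Commute (coordOp i S) (coordOp j T) :=
  continuousLinearMap_ext_piProd fun g => by
    simp only [mul_apply_eq_comp, coordOp_piProd, update_of_ne hij,
      update_of_ne hij.symm, update_comm hij]

end Products

end

end ContinuousMap

theorem stmt_15_general (d : ℕ) :
    ∃ V : Fin d →
        ((C(Set.Icc (0 : ℝ) 1, ℝ) →L[ℝ] C(Set.Icc (0 : ℝ) 1, ℝ)) →ₐ[ℝ]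
          (C((Fin d → Set.Icc (0 : ℝ) 1), ℝ) →L[ℝ] C((Fin d → Set.Icc (0 : ℝ) 1), ℝ))),
      (∀ j, Continuous (V j)) ∧
      (∀ j T, ActsInCoordC d j T (V j T)) ∧
      (∀ j T S', ActsInCoordC d j T S' → S' = V j T) ∧
      (∀ i j, i ≠ j → ∀ S T, (V i S) * (V j T) = (V j T) * (V i S)) :=
  ⟨ContinuousMap.coordOpAlgHom, ContinuousMap.continuous_coordOpAlgHom, fun _ _ _ _ => rfl,
    fun _ _ _ h => ContinuousLinearMap.ext fun f => ContinuousMap.ext (h f),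
    fun _ _ hij S T => (ContinuousMap.commute_coordOp hij S T).eq⟩

/-- Lemma 1.3.2: every bounded operator `T` on `C([0,1])` extends uniquely to an
operator `𝒯^j = V_j(T)` on `C([0,1]^d)` acting in the `j`-th variable; each `V_j` is a
continuous Banach-algebra homomorphism, and `V_i(S) ∘ V_j(T) = V_j(T) ∘ V_i(S)` for
`i ≠ j`. -/
theorem stmt_15 (d : ℕ) (hd : 0 < d) :
    ∃ V : Fin d →
        ((C(Set.Icc (0 : ℝ) 1, ℝ) →L[ℝ] C(Set.Icc (0 : ℝ) 1, ℝ)) →ₐ[ℝ]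
          (C((Fin d → Set.Icc (0 : ℝ) 1), ℝ) →L[ℝ] C((Fin d → Set.Icc (0 : ℝ) 1), ℝ))),
      (∀ j, Continuous (V j)) ∧
      (∀ j T, ActsInCoordC d j T (V j T)) ∧
      (∀ j T S', ActsInCoordC d j T S' → S' = V j T) ∧
      (∀ i j, i ≠ j → ∀ S T, (V i S) * (V j T) = (V j T) * (V i S)) :=
  stmt_15_general d
end

section
/- Let d ∈ ℕ, β ∈ (ℝ₊)^d with min_j β_j = 1, l ∈ ℕ^d, and let N = card{j : β_j = 1}. For r ∈ ℕ, the total number of tensor-grid interpolation points ∑_{κ ∈ ℤ₊^d, (κ,β) ≤ r} (∏_j l_j) · 2^{(κ, e)} is at most c · 2^r · r^{N-1} for a constant c = c(d, l, β) > 0 independent of r, where e = (1,...,1). Consequently, for all sufficiently large n there exists r ∈ ℕ with c·2^r·r^{N-1} ≤ n < c·2^{r+1}·(r+1)^{N-1}. -/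
/-!
Pick a coordinate `j₀` with `β j₀ = 1` and fix the other coordinates `κ'`. Summing over `κ j₀`
is a truncated geometric series, `∑_{m ≤ r - (κ', β)} 2 ^ m ≤ 2 · 2 ^ (r - (κ', β))`, so the count
is at most `2 · 2 ^ r · ∑_{κ'} ∏_{j ≠ j₀} θ_j ^ κ'_j` with `θ_j = 2 ^ (1 - β_j)`. As `β ≥ 1` forces
`κ_j ≤ r`, this is a product of geometric sums: each of the `N - 1` coordinates with `θ_j = 1`
contributes `r + 1 ≤ 2r`, and every other one at most `(1 - θ_j)⁻¹`.

The bracketing of `n` holds for any sequence `g` tending to infinity: take the least `r` with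
`n < g (r + 1)`.
-/

open scoped Classical

open Finset Filter

lemma sum_range_ite_two_pow_le (t : ℝ) (n : ℕ) :
    ∑ m ∈ range n, (if (m : ℝ) ≤ t then (2 : ℝ) ^ m else 0) ≤ 2 * 2 ^ t := by
  rcases lt_or_ge t 0 with ht | ht
  · rw [sum_eq_zero fun m _ => if_neg (ht.trans_le m.cast_nonneg).not_ge]
    positivity
  set M := ⌊t⌋₊
  calc ∑ m ∈ range n, (if (m : ℝ) ≤ t then (2 : ℝ) ^ m else 0)
      ≤ ∑ m ∈ range n, (if m ∈ range (M + 1) then (2 : ℝ) ^ m else 0) := by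
        gcongr with m
        split_ifs with hmt hmM
        · exact le_rfl
        · exact absurd (mem_range_succ_iff.mpr (Nat.le_floor hmt)) hmM
        · positivity
        · exact le_rfl
    _ = ∑ m ∈ range n ∩ range (M + 1), (2 : ℝ) ^ m := sum_ite_mem _ _ _
    _ ≤ ∑ m ∈ range (M + 1), (2 : ℝ) ^ m :=
        sum_le_sum_of_subset_of_nonneg inter_subset_right fun _ _ _ => by positivity
    _ ≤ 2 ^ (M + 1) := by
        rw [geom_sum_eq (by norm_num)]
        norm_num
    _ = 2 * 2 ^ (M : ℝ) := by rw [pow_succ', Real.rpow_natCast]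
    _ ≤ 2 * 2 ^ t := by gcongr; exacts [one_le_two, Nat.floor_le ht]

lemma two_rpow_one_sub_lt_one {b : ℝ} (hb : 1 < b) : (2 : ℝ) ^ (1 - b) < 1 :=
  Real.rpow_lt_one_of_one_lt_of_neg one_lt_two (by linarith)

lemma sum_range_two_rpow_one_sub_pow_le {b : ℝ} (hb : 1 ≤ b) {r : ℕ} (hr : 1 ≤ r) :
    ∑ k ∈ range (r + 1), ((2 : ℝ) ^ (1 - b)) ^ k ≤
      if b = 1 then 2 * (r : ℝ) else (1 - 2 ^ (1 - b))⁻¹ := by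
  split_ifs with h
  · have : (1 : ℝ) ≤ r := by exact_mod_cast hr
    simp only [h, sub_self, Real.rpow_zero, one_pow, sum_const, card_range, nsmul_one]
    push_cast
    linarith
  · rw [range_eq_Ico]
    simpa using geom_sum_Ico_le_of_lt_one (x := (2 : ℝ) ^ (1 - b)) (m := 0) (n := r + 1)
      (by positivity) (two_rpow_one_sub_lt_one (hb.lt_of_ne' h))

lemma tendsto_mul_two_pow_mul_rpow {c s : ℝ} (hc : 0 < c) (hs : 0 ≤ s) :
    Tendsto (fun r : ℕ => c * 2 ^ r * (r : ℝ) ^ s) atTop atTop := by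
  refine tendsto_atTop_mono' _ ?_ ((tendsto_pow_atTop_atTop_of_one_lt one_lt_two).const_mul_atTop hc)
  filter_upwards [eventually_ge_atTop 1] with r hr
  exact le_mul_of_one_le_right (by positivity) (Real.one_le_rpow (by exact_mod_cast hr) hs)

lemma exists_le_lt_succ_of_tendsto {g : ℕ → ℝ} (hg : Tendsto g atTop atTop) :
    ∃ n₀ : ℕ, ∀ n : ℕ, n₀ ≤ n → ∃ r : ℕ, 1 ≤ r ∧ g r ≤ n ∧ n < g (r + 1) := by
  refine ⟨⌈g 1⌉₊, fun n hn => ?_⟩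
  have hex : ∃ m, (n : ℝ) < g (m + 1) := by
    obtain ⟨M, hM⟩ := (hg.eventually_gt_atTop (n : ℝ)).exists_forall_of_atTop
    exact ⟨M, hM _ M.le_succ⟩
  have hg1 : g 1 ≤ n := (Nat.le_ceil _).trans (by exact_mod_cast hn)
  have hr : 1 ≤ Nat.find hex := Nat.one_le_iff_ne_zero.mpr fun h0 =>
    (Nat.find_spec hex).not_ge (by rwa [h0])
  refine ⟨Nat.find hex, hr, ?_, Nat.find_spec hex⟩
  have := Nat.find_min hex (Nat.sub_lt hr one_pos)
  rwa [Nat.sub_add_cancel hr, not_lt] at this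

section SparseGrid

variable {ι : Type*} [Fintype ι]

lemma pow_sum_mul_rpow_sub_eq {a : ℝ} (ha : 0 < a) (κ : ι → ℕ) (β : ι → ℝ) (t : ℝ) :
    a ^ (∑ j, κ j) * a ^ (t - ∑ j, (κ j : ℝ) * β j) = a ^ t * ∏ j, (a ^ (1 - β j)) ^ κ j := by
  simp_rw [← Real.rpow_mul_natCast ha.le, ← Real.rpow_sum_of_pos ha, ← Real.rpow_natCast,
    ← Real.rpow_add ha]
  congr 1
  push_cast
  simp only [sub_mul, one_mul, sum_sub_distrib, mul_comm (β _)]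
  ring

variable [DecidableEq ι]

lemma sum_piFinset_eq_sum_sum_funSplitAt {α M : Type*} [AddCommMonoid M] (j₀ : ι)
    (s : Finset α) (f : (ι → α) → M) :
    ∑ κ ∈ Fintype.piFinset fun _ => s, f κ =
      ∑ κ' ∈ Fintype.piFinset (fun _ : {j // j ≠ j₀} => s), ∑ m ∈ s,
        f ((Equiv.funSplitAt j₀ α).symm (m, κ')) := by
  rw [← sum_product_right (f := fun p => f ((Equiv.funSplitAt j₀ α).symm p))]
  refine sum_equiv (Equiv.funSplitAt j₀ α) (fun κ => ?_) fun κ _ =>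
    congr_arg f ((Equiv.funSplitAt j₀ α).symm_apply_apply κ).symm
  simp only [Fintype.mem_piFinset, mem_product, Equiv.funSplitAt_apply]
  exact ⟨fun h => ⟨h j₀, fun j => h j⟩, fun h j => if hj : j = j₀ then hj ▸ h.1 else h.2 ⟨j, hj⟩⟩

lemma sum_piFinset_ite_two_pow_le (β : ι → ℝ) {j₀ : ι} (hj₀ : β j₀ = 1) (n : ℕ) (t : ℝ) :
    ∑ κ ∈ Fintype.piFinset fun _ => range n,
        (if ∑ j, (κ j : ℝ) * β j ≤ t then (2 : ℝ) ^ ∑ j, κ j else 0) ≤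
      2 * 2 ^ t * ∏ j : {j // j ≠ j₀}, ∑ k ∈ range n, ((2 : ℝ) ^ (1 - β j)) ^ k := by
  rw [sum_piFinset_eq_sum_sum_funSplitAt j₀, prod_univ_sum, mul_sum]
  gcongr with κ' _
  have hterm : ∀ m : ℕ,
      (if ∑ j, (((Equiv.funSplitAt j₀ ℕ).symm (m, κ') j : ℕ) : ℝ) * β j ≤ t
        then (2 : ℝ) ^ ∑ j, (Equiv.funSplitAt j₀ ℕ).symm (m, κ') j else 0) =
      2 ^ (∑ j, κ' j) * if (m : ℝ) ≤ t - ∑ j, (κ' j : ℝ) * β j then 2 ^ m else 0 := by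
    intro m
    have hj₀m : (Equiv.funSplitAt j₀ ℕ).symm (m, κ') j₀ = m := by simp
    have hjκ' : ∀ j : {j // j ≠ j₀}, (Equiv.funSplitAt j₀ ℕ).symm (m, κ') j = κ' j := fun j => by
      simp [j.2]
    simp only [Fintype.sum_eq_add_sum_subtype_ne _ j₀, hj₀m, hjκ', hj₀, mul_one, pow_add,
      le_sub_iff_add_le, mul_ite_zero, mul_comm ((2 : ℝ) ^ m)]
  calc _ = 2 ^ (∑ j, κ' j) * ∑ m ∈ range n, (if (m : ℝ) ≤ t - ∑ j, (κ' j : ℝ) * β j then (2 : ℝ) ^ m else 0) := by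
        rw [mul_sum]; exact sum_congr rfl fun m _ => hterm m
    _ ≤ 2 ^ (∑ j, κ' j) * (2 * 2 ^ (t - ∑ j, (κ' j : ℝ) * β j)) := by gcongr; exact sum_range_ite_two_pow_le _ _
    _ = 2 * 2 ^ t * ∏ j : {j // j ≠ j₀}, ((2 : ℝ) ^ (1 - β j)) ^ κ' j := by
        rw [mul_left_comm, pow_sum_mul_rpow_sub_eq two_pos, mul_assoc]

lemma tsum_ite_eq_sum_piFinset (β : ι → ℝ) (hβ : ∀ j, 1 ≤ β j) (r : ℕ) (f : (ι → ℕ) → ℝ) :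
    ∑' κ : ι → ℕ, (if ∑ j, (κ j : ℝ) * β j ≤ r then f κ else 0) =
      ∑ κ ∈ Fintype.piFinset fun _ => range (r + 1),
        (if ∑ j, (κ j : ℝ) * β j ≤ r then f κ else 0) := by
  refine tsum_eq_sum fun κ hκ => if_neg ?_
  simp only [Fintype.mem_piFinset, mem_range, not_forall, not_lt] at hκ
  obtain ⟨i, hi⟩ := hκ
  refine not_le.mpr ?_
  calc (r : ℝ) < κ i := by exact_mod_cast hi
    _ ≤ κ i * β i := le_mul_of_one_le_right (Nat.cast_nonneg _) (hβ i)
    _ ≤ ∑ j, (κ j : ℝ) * β j :=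
        single_le_sum (fun j _ => mul_nonneg (Nat.cast_nonneg _) (zero_le_one.trans (hβ j)))
          (mem_univ i)

lemma prod_sum_range_two_rpow_one_sub_pow_le (β : ι → ℝ) (hβ : ∀ j, 1 ≤ β j) {j₀ : ι}
    (hj₀ : β j₀ = 1) {r : ℕ} (hr : 1 ≤ r) :
    ∏ j : {j // j ≠ j₀}, ∑ k ∈ range (r + 1), ((2 : ℝ) ^ (1 - β j)) ^ k ≤
      (2 * (r : ℝ)) ^ (#{j | β j = 1} - 1) * ∏ j with β j ≠ 1, (1 - 2 ^ (1 - β j))⁻¹ := by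
  rw [← prod_subtype (univ.erase j₀) (fun j => by simp)
    fun j => ∑ k ∈ range (r + 1), ((2 : ℝ) ^ (1 - β j)) ^ k]
  calc _ ≤ ∏ j ∈ univ.erase j₀, if β j = 1 then 2 * (r : ℝ) else (1 - 2 ^ (1 - β j))⁻¹ :=
        prod_le_prod (fun j _ => sum_nonneg fun k _ => by positivity)
          fun j _ => sum_range_two_rpow_one_sub_pow_le (hβ j) hr
    _ = _ := by
        rw [prod_ite, prod_const, filter_erase, filter_erase, card_erase_of_mem (by simp [hj₀]),
          erase_eq_of_notMem (by simp [hj₀])]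

theorem exists_tsum_ite_two_pow_le (β : ι → ℝ) (hβ : ∀ j, 1 ≤ β j) {j₀ : ι} (hj₀ : β j₀ = 1) :
    ∃ C > 0, ∀ r : ℕ, 1 ≤ r →
      ∑' κ : ι → ℕ, (if ∑ j, (κ j : ℝ) * β j ≤ r then (2 : ℝ) ^ ∑ j, κ j else 0) ≤
        C * 2 ^ r * r ^ (#{j | β j = 1} - 1) := by
  refine ⟨2 * 2 ^ (#{j | β j = 1} - 1) * ∏ j with β j ≠ 1, (1 - 2 ^ (1 - β j))⁻¹, ?_,
    fun r hr => ?_⟩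
  · refine mul_pos (by positivity) (prod_pos fun j hj => inv_pos.mpr (sub_pos.mpr ?_))
    exact two_rpow_one_sub_lt_one ((hβ j).lt_of_ne' (mem_filter.mp hj).2)
  rw [tsum_ite_eq_sum_piFinset β hβ]
  calc _ ≤ _ := sum_piFinset_ite_two_pow_le β hj₀ (r + 1) r
    _ ≤ 2 * 2 ^ (r : ℝ) * ((2 * r) ^ (#{j | β j = 1} - 1) *
          ∏ j with β j ≠ 1, (1 - 2 ^ (1 - β j))⁻¹) := by
        gcongr
        exact prod_sum_range_two_rpow_one_sub_pow_le β hβ hj₀ hr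
    _ = _ := by rw [Real.rpow_natCast, mul_pow]; ring

end SparseGrid

theorem stmt_19_general (d : ℕ) (β : Fin d → ℝ)
    (hβ : ∀ j, 1 ≤ β j) (hβ1 : ∃ j, β j = 1) (l : Fin d → ℕ) :
    ∃ c : ℝ, 0 < c ∧
      (∀ r : ℕ, 1 ≤ r →
        (∑' κ : Fin d → ℕ,
            (if (∑ j, (κ j : ℝ) * β j) ≤ (r : ℝ) then
              ((∏ j, l j : ℕ) : ℝ) * 2 ^ (∑ j, κ j) else 0)) ≤
          c * (2 : ℝ) ^ r *
            (r : ℝ) ^ ((((Finset.univ.filter fun j => β j = 1).card : ℝ)) - 1)) ∧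
      (∃ n₀ : ℕ, ∀ n : ℕ, n₀ ≤ n → ∃ r : ℕ, 1 ≤ r ∧
        c * (2 : ℝ) ^ r *
            (r : ℝ) ^ ((((Finset.univ.filter fun j => β j = 1).card : ℝ)) - 1) ≤ (n : ℝ) ∧
        (n : ℝ) < c * (2 : ℝ) ^ (r + 1) *
            ((r : ℝ) + 1) ^ ((((Finset.univ.filter fun j => β j = 1).card : ℝ)) - 1)) := by
  obtain ⟨j₀, hj₀⟩ := hβ1
  obtain ⟨C, hC, hbound⟩ := exists_tsum_ite_two_pow_le β hβ hj₀
  have hN : 1 ≤ #{j | β j = 1} := card_pos.mpr ⟨j₀, by simp [hj₀]⟩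
  set L : ℝ := ((∏ j, l j : ℕ) : ℝ)
  have hc : 0 < (L + 1) * C := by positivity
  refine ⟨(L + 1) * C, hc, fun r hr => ?_, ?_⟩
  · rw [← Nat.cast_pred hN, Real.rpow_natCast]
    simp_rw [← mul_ite_zero]
    rw [tsum_mul_left]
    calc _ ≤ (L + 1) * (C * 2 ^ r * r ^ (#{j | β j = 1} - 1)) :=
          mul_le_mul (by linarith) (hbound r hr) (tsum_nonneg fun κ => by positivity)
            (by positivity)
      _ = _ := by ring
  · simpa only [Nat.cast_succ] using exists_le_lt_succ_of_tendsto
      (tendsto_mul_two_pow_mul_rpow hc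
        (sub_nonneg.mpr (by exact_mod_cast hN : (1 : ℝ) ≤ #{j | β j = 1})))

/-- Counting the sparse-grid interpolation points: with `min_j β_j = 1` and
`N = card{j : β_j = 1}`, the number `∑_{(κ,β) ≤ r} (∏_j l_j)·2^{(κ,e)}` of points is at
most `c·2^r·r^{N-1}`, and consequently every sufficiently large `n` lies between
consecutive such bounds. -/
theorem stmt_19 (d : ℕ) (hd : 0 < d) (β : Fin d → ℝ)
    (hβ : ∀ j, 1 ≤ β j) (hβ1 : ∃ j, β j = 1) (l : Fin d → ℕ) (hl : ∀ j, 1 ≤ l j) :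
    ∃ c : ℝ, 0 < c ∧
      (∀ r : ℕ, 1 ≤ r →
        (∑' κ : Fin d → ℕ,
            (if (∑ j, (κ j : ℝ) * β j) ≤ (r : ℝ) then
              ((∏ j, l j : ℕ) : ℝ) * 2 ^ (∑ j, κ j) else 0)) ≤
          c * (2 : ℝ) ^ r *
            (r : ℝ) ^ ((((Finset.univ.filter fun j => β j = 1).card : ℝ)) - 1)) ∧
      (∃ n₀ : ℕ, ∀ n : ℕ, n₀ ≤ n → ∃ r : ℕ, 1 ≤ r ∧
        c * (2 : ℝ) ^ r *
            (r : ℝ) ^ ((((Finset.univ.filter fun j => β j = 1).card : ℝ)) - 1) ≤ (n : ℝ) ∧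
        (n : ℝ) < c * (2 : ℝ) ^ (r + 1) *
            ((r : ℝ) + 1) ^ ((((Finset.univ.filter fun j => β j = 1).card : ℝ)) - 1)) :=
  stmt_19_general d β hβ hβ1 l
end
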